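/- arXiv:2602.18078 — 6 statements merged into one kernel-verified Lean document; each statement's English description precedes it below -/
import Mathlib

section
/- The function Φ defined by Φ(x) = ln((e^x − 1)/x) for x ≠ 0 and Φ(0) = 0 satisfies 0 ≤ Φ'(x) ≤ 1 for all real x; in particular Φ is Lipschitz continuous with Lipschitz constant 1. -/
open Real Filter Topology

/-- The function Φ(x) = ln((e^x − 1)/x) for x ≠ 0, Φ(0) = 0. -/
noncomputable def Phi (x : ℝ) : ℝ :=
  if x = 0 then 0 else Real.log ((Real.exp x - 1) / x)

/-- The derivative of Φ away from 0. -/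
noncomputable def PhiD (x : ℝ) : ℝ :=
  (x * Real.exp x - (Real.exp x - 1)) / (x * (Real.exp x - 1))

lemma denom_pos {x : ℝ} (hx : x ≠ 0) : 0 < x * (Real.exp x - 1) := by
  rcases lt_or_gt_of_ne hx with h | h
  · have : Real.exp x < 1 := by
      calc Real.exp x < Real.exp 0 := Real.exp_lt_exp.mpr h
        _ = 1 := Real.exp_zero
    exact mul_pos_of_neg_of_neg h (by linarith)
  · have : 1 < Real.exp x := by
      calc (1:ℝ) = Real.exp 0 := Real.exp_zero.symm
        _ < Real.exp x := Real.exp_lt_exp.mpr h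
    exact mul_pos h (by linarith)

lemma ratio_pos {x : ℝ} (hx : x ≠ 0) : 0 < (Real.exp x - 1) / x := by
  have h := denom_pos hx
  have hx2 : (0:ℝ) < x ^ 2 := by positivity
  have heq : (Real.exp x - 1) / x = x * (Real.exp x - 1) / x ^ 2 := by
    field_simp
  rw [heq]
  exact div_pos h hx2

lemma exp_sub_one_ne {x : ℝ} (hx : x ≠ 0) : Real.exp x - 1 ≠ 0 := by
  have := denom_pos hx
  intro h; rw [h, mul_zero] at this; exact lt_irrefl _ this

lemma hasDerivAt_Phi_ne {x : ℝ} (hx : x ≠ 0) : HasDerivAt Phi (PhiD x) x := by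
  have h1 : HasDerivAt (fun y => (Real.exp y - 1) / y)
      ((Real.exp x * x - (Real.exp x - 1) * 1) / x ^ 2) x :=
    ((Real.hasDerivAt_exp x).sub_const 1).div (hasDerivAt_id x) hx
  have h2 := h1.log (ne_of_gt (ratio_pos hx))
  have heq : (Real.exp x * x - (Real.exp x - 1) * 1) / x ^ 2 / ((Real.exp x - 1) / x)
      = PhiD x := by
    unfold PhiD
    have := exp_sub_one_ne hx
    field_simp
  rw [heq] at h2
  apply h2.congr_of_eventuallyEq
  filter_upwards [eventually_ne_nhds hx] with y hy
  simp [Phi, hy]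

lemma PhiD_bounds {x : ℝ} (hx : x ≠ 0) : 0 ≤ PhiD x ∧ PhiD x ≤ 1 := by
  have hden := denom_pos hx
  have h1 : x + 1 ≤ Real.exp x := Real.add_one_le_exp x
  have h2 : -x + 1 ≤ Real.exp (-x) := Real.add_one_le_exp (-x)
  have h3 : Real.exp (-x) * Real.exp x = 1 := by
    rw [← Real.exp_add]; simp
  have h4 : 0 < Real.exp x := Real.exp_pos x
  have hnum : 0 ≤ x * Real.exp x - (Real.exp x - 1) := by nlinarith
  unfold PhiD
  constructor
  · exact div_nonneg hnum hden.le
  · rw [div_le_one hden]; nlinarith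

lemma tendsto_ratio : Tendsto (fun x => (Real.exp x - 1) / x) (𝓝[≠] (0:ℝ)) (𝓝 1) := by
  have h := hasDerivAt_iff_tendsto_slope.mp (Real.hasDerivAt_exp 0)
  rw [Real.exp_zero] at h
  apply h.congr'
  filter_upwards [self_mem_nhdsWithin] with y hy
  simp [slope_def_field, Real.exp_zero]

lemma tendsto_num : Tendsto (fun x => (x * Real.exp x - (Real.exp x - 1)) / x ^ 2)
    (𝓝[≠] (0:ℝ)) (𝓝 (1/2)) := by
  apply HasDerivAt.lhopital_zero_nhdsNE (f' := fun x => x * Real.exp x)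
      (g' := fun x => 2 * x)
  · filter_upwards with y
    have h : HasDerivAt (fun x => x * Real.exp x - (Real.exp x - 1))
        (1 * Real.exp y + y * Real.exp y - Real.exp y) y :=
      ((hasDerivAt_id y).mul (Real.hasDerivAt_exp y)).sub
        ((Real.hasDerivAt_exp y).sub_const 1)
    convert h using 1; ring
  · filter_upwards with y
    simpa using (hasDerivAt_pow 2 y)
  · filter_upwards [self_mem_nhdsWithin] with y hy
    simpa using hy
  · have : Tendsto (fun x => x * Real.exp x - (Real.exp x - 1)) (𝓝 (0:ℝ)) (𝓝 0) := by
      have := (Real.continuous_exp.tendsto 0)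
      have hc : Continuous (fun x : ℝ => x * Real.exp x - (Real.exp x - 1)) := by
        continuity
      simpa using hc.tendsto 0
    exact this.mono_left nhdsWithin_le_nhds
  · have hc : Continuous (fun x : ℝ => x ^ 2) := by continuity
    have := hc.tendsto 0
    norm_num at this
    simpa using this.mono_left nhdsWithin_le_nhds
  · have : Tendsto (fun x : ℝ => Real.exp x / 2) (𝓝 0) (𝓝 (1/2)) := by
      have := (Real.continuous_exp.tendsto 0)
      rw [Real.exp_zero] at this
      exact this.div_const 2
    apply (this.mono_left nhdsWithin_le_nhds).congr'
    filter_upwards [self_mem_nhdsWithin] with y hy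
    have hy' : (y:ℝ) ≠ 0 := hy
    field_simp

lemma tendsto_PhiD : Tendsto PhiD (𝓝[≠] (0:ℝ)) (𝓝 (1/2)) := by
  have h := tendsto_num.div tendsto_ratio one_ne_zero
  rw [div_one] at h
  apply h.congr'
  filter_upwards [self_mem_nhdsWithin] with y hy
  have hy' : (y:ℝ) ≠ 0 := hy
  have := exp_sub_one_ne hy'
  rw [Pi.div_apply]
  unfold PhiD
  field_simp

lemma tendsto_Phi : Tendsto Phi (𝓝[≠] (0:ℝ)) (𝓝 0) := by
  have h := (Real.continuousAt_log one_ne_zero).tendsto.comp tendsto_ratio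
  rw [Real.log_one] at h
  apply h.congr'
  filter_upwards [self_mem_nhdsWithin] with y hy
  have hy' : (y:ℝ) ≠ 0 := hy
  simp [Phi, hy', Function.comp]

lemma hasDerivAt_Phi_zero : HasDerivAt Phi (1/2) 0 := by
  rw [hasDerivAt_iff_tendsto_slope]
  have h : Tendsto (fun x => Phi x / x) (𝓝[≠] (0:ℝ)) (𝓝 (1/2)) := by
    apply HasDerivAt.lhopital_zero_nhdsNE (f' := PhiD) (g' := fun _ => (1:ℝ))
    · filter_upwards [self_mem_nhdsWithin] with y hy
      exact hasDerivAt_Phi_ne hy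
    · filter_upwards with y; exact hasDerivAt_id y
    · filter_upwards with y; exact one_ne_zero
    · exact tendsto_Phi
    · exact tendsto_id.mono_left nhdsWithin_le_nhds
    · simpa using tendsto_PhiD
  apply h.congr'
  filter_upwards [self_mem_nhdsWithin] with y hy
  simp [slope_def_field, Phi]

lemma deriv_Phi_bounds (x : ℝ) : 0 ≤ deriv Phi x ∧ deriv Phi x ≤ 1 := by
  rcases eq_or_ne x 0 with rfl | hx
  · rw [hasDerivAt_Phi_zero.deriv]; norm_num
  · rw [(hasDerivAt_Phi_ne hx).deriv]; exact PhiD_bounds hx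

theorem phi_deriv_bounds_and_lipschitz :
    (∀ x : ℝ, 0 ≤ deriv Phi x ∧ deriv Phi x ≤ 1) ∧ LipschitzWith 1 Phi := by
  refine ⟨deriv_Phi_bounds, ?_⟩
  apply lipschitzWith_of_nnnorm_deriv_le
  · intro x
    rcases eq_or_ne x 0 with rfl | hx
    · exact hasDerivAt_Phi_zero.differentiableAt
    · exact (hasDerivAt_Phi_ne hx).differentiableAt
  · intro x
    obtain ⟨h0, h1⟩ := deriv_Phi_bounds x
    rw [← NNReal.coe_le_coe]
    push_cast
    rw [Real.norm_eq_abs, abs_le]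
    constructor <;> linarith
end

section
/- The function Ψ(x) = (1/x) ln((e^x − 1)/x) for x ≠ 0, extended by Ψ(0) = 1/2, is monotone nondecreasing, takes values in [0,1], tends to 0 as x → −∞, and tends to 1 as x → +∞ (i.e., Ψ is a cumulative distribution function). -/
open Real Filter

/-- The function Ψ(x) = (1/x)·ln((e^x − 1)/x) for x ≠ 0, Ψ(0) = 1/2. -/
noncomputable def Psi (x : ℝ) : ℝ :=
  if x = 0 then 1 / 2 else (1 / x) * Real.log ((Real.exp x - 1) / x)

/- auxiliary lemmas -/

lemma exp_sub_one_pos' {x : ℝ} (hx : 0 < x) : 0 < Real.exp x - 1 := by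
  have h : Real.exp 0 < Real.exp x := Real.exp_lt_exp.mpr hx
  rw [Real.exp_zero] at h; linarith

lemma self_le_sinh' {x : ℝ} (hx : 0 ≤ x) : x ≤ Real.sinh x := by
  rcases eq_or_lt_of_le hx with h | h
  · simp [← h]
  · exact le_of_lt (Real.self_lt_sinh_iff.mpr h)

lemma key_ineq {x : ℝ} (hx : 0 ≤ x) : x * Real.exp (x / 2) ≤ Real.exp x - 1 := by
  have h := self_le_sinh' (by linarith : (0:ℝ) ≤ x / 2)
  rw [Real.sinh_eq] at h
  have hmul : x / 2 * Real.exp (x / 2) ≤ (Real.exp (x / 2) - Real.exp (-(x / 2))) / 2 * Real.exp (x / 2) :=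
    mul_le_mul_of_nonneg_right h (Real.exp_nonneg _)
  have hid : Real.exp (x / 2) * Real.exp (x / 2) = Real.exp x := by
    rw [← Real.exp_add]; ring_nf
  have hid2 : Real.exp (-(x / 2)) * Real.exp (x / 2) = 1 := by
    rw [← Real.exp_add]; ring_nf; exact Real.exp_zero
  nlinarith [hmul, hid, hid2]

lemma sq_ineq {x : ℝ} (hx : 0 ≤ x) : x ^ 2 * Real.exp x ≤ (Real.exp x - 1) ^ 2 := by
  have h := key_ineq hx
  have h0 : 0 ≤ Real.exp x - 1 := by linarith [Real.add_one_le_exp x]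
  have hx2 : 0 ≤ x * Real.exp (x / 2) := mul_nonneg hx (Real.exp_nonneg _)
  have h2 : (x * Real.exp (x / 2)) ^ 2 ≤ (Real.exp x - 1) ^ 2 := by
    apply sq_le_sq' (by linarith) h
  have hid : Real.exp (x / 2) * Real.exp (x / 2) = Real.exp x := by
    rw [← Real.exp_add]; ring_nf
  nlinarith [h2, hid]

/-- The auxiliary function h(x) = x·φ'(x) − φ(x) where φ(x) = log((e^x−1)/x). -/
noncomputable def haux (x : ℝ) : ℝ :=
  (x * Real.exp x - (Real.exp x - 1)) / (Real.exp x - 1) - Real.log ((Real.exp x - 1) / x)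

lemma hasDerivAt_A {x : ℝ} (hx : x ≠ 0) :
    HasDerivAt (fun y => (Real.exp y - 1) / y)
      ((x * Real.exp x - (Real.exp x - 1)) / x ^ 2) x := by
  have h1 : HasDerivAt (fun y => Real.exp y - 1) (Real.exp x) x :=
    (Real.hasDerivAt_exp x).sub_const 1
  have h2 : HasDerivAt (fun y : ℝ => y) 1 x := hasDerivAt_id x
  have := h1.div h2 hx
  refine this.congr_deriv ?_
  field_simp

lemma A_pos {x : ℝ} (hx : 0 < x) : 0 < (Real.exp x - 1) / x :=
  div_pos (exp_sub_one_pos' hx) hx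

lemma hasDerivAt_log_A {x : ℝ} (hx : 0 < x) :
    HasDerivAt (fun y => Real.log ((Real.exp y - 1) / y))
      ((x * Real.exp x - (Real.exp x - 1)) / (x * (Real.exp x - 1))) x := by
  have := (hasDerivAt_A hx.ne').log (A_pos hx).ne'
  convert this using 1
  have h1 := exp_sub_one_pos' hx
  field_simp

lemma hasDerivAt_haux {x : ℝ} (hx : 0 < x) :
    HasDerivAt haux (1 / x - x * Real.exp x / (Real.exp x - 1) ^ 2) x := by
  have he := exp_sub_one_pos' hx
  have h1 : HasDerivAt (fun y => y * Real.exp y - (Real.exp y - 1)) (x * Real.exp x) x := by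
    have := ((hasDerivAt_id x).mul (Real.hasDerivAt_exp x)).sub
      ((Real.hasDerivAt_exp x).sub_const 1)
    refine this.congr_deriv ?_
    simp
  have h2 : HasDerivAt (fun y => Real.exp y - 1) (Real.exp x) x :=
    (Real.hasDerivAt_exp x).sub_const 1
  have hdiv := h1.div h2 he.ne'
  have hfull := hdiv.sub (hasDerivAt_log_A hx)
  refine hfull.congr_deriv ?_
  field_simp
  ring

lemma haux_deriv_nonneg {x : ℝ} (hx : 0 < x) :
    0 ≤ 1 / x - x * Real.exp x / (Real.exp x - 1) ^ 2 := by
  have he := exp_sub_one_pos' hx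
  have h := sq_ineq hx.le
  rw [sub_nonneg, div_le_div_iff₀ (by positivity) hx]
  nlinarith

lemma tendsto_A : Tendsto (fun x => (Real.exp x - 1) / x) (nhdsWithin 0 {(0:ℝ)}ᶜ) (nhds 1) := by
  have h := hasDerivAt_iff_tendsto_slope.mp (Real.hasDerivAt_exp 0)
  rw [Real.exp_zero] at h
  refine h.congr (fun x => ?_)
  simp [slope_def_field]

lemma tendsto_haux : Tendsto haux (nhdsWithin 0 (Set.Ioi 0)) (nhds 0) := by
  have hA : Tendsto (fun x => (Real.exp x - 1) / x) (nhdsWithin 0 (Set.Ioi 0)) (nhds 1) :=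
    tendsto_A.mono_left (nhdsWithin_mono 0 (fun x hx => ne_of_gt hx))
  have hexp : Tendsto (fun x : ℝ => Real.exp x) (nhdsWithin 0 (Set.Ioi 0)) (nhds 1) := by
    have := Real.continuous_exp.tendsto 0
    rw [Real.exp_zero] at this
    exact this.mono_left nhdsWithin_le_nhds
  have hlog : Tendsto (fun x => Real.log ((Real.exp x - 1) / x)) (nhdsWithin 0 (Set.Ioi 0)) (nhds 0) := by
    have := (Real.continuousAt_log one_ne_zero).tendsto.comp hA
    simpa [Function.comp_def] using this
  have hfrac : Tendsto (fun x => Real.exp x / ((Real.exp x - 1) / x) - 1)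
      (nhdsWithin 0 (Set.Ioi 0)) (nhds 0) := by
    have := (hexp.div hA one_ne_zero).sub_const 1
    simpa using this
  have key : Tendsto (fun x => Real.exp x / ((Real.exp x - 1) / x) - 1 - Real.log ((Real.exp x - 1) / x))
      (nhdsWithin 0 (Set.Ioi 0)) (nhds 0) := by
    simpa using hfrac.sub hlog
  refine key.congr' ?_
  filter_upwards [self_mem_nhdsWithin] with x hx
  have hx' : (0:ℝ) < x := hx
  have he := exp_sub_one_pos' hx'
  unfold haux
  field_simp

lemma haux_mono : MonotoneOn haux (Set.Ioi (0:ℝ)) := by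
  apply monotoneOn_of_deriv_nonneg (convex_Ioi 0)
  · intro x hx
    exact (hasDerivAt_haux hx).continuousAt.continuousWithinAt
  · intro x hx
    rw [interior_Ioi] at hx
    exact (hasDerivAt_haux hx).differentiableAt.differentiableWithinAt
  · intro x hx
    rw [interior_Ioi] at hx
    rw [(hasDerivAt_haux hx).deriv]
    exact haux_deriv_nonneg hx

lemma haux_nonneg {x : ℝ} (hx : 0 < x) : 0 ≤ haux x := by
  apply le_of_tendsto tendsto_haux
  filter_upwards [self_mem_nhdsWithin, Ioo_mem_nhdsGT_of_mem (Set.left_mem_Ico.mpr hx)]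
    with y hy hy2
  exact haux_mono hy (Set.mem_Ioi.mpr hx) hy2.2.le

lemma hasDerivAt_Psi {x : ℝ} (hx : 0 < x) : HasDerivAt Psi (haux x / x ^ 2) x := by
  have he := exp_sub_one_pos' hx
  have h1 : HasDerivAt (fun y : ℝ => 1 / y) (-(1 / x ^ 2)) x := by
    have := hasDerivAt_inv hx.ne'
    simpa [one_div] using this
  have h2 := hasDerivAt_log_A hx
  have hmul := h1.mul h2
  have heq : HasDerivAt (fun y => (1 / y) * Real.log ((Real.exp y - 1) / y))
      (haux x / x ^ 2) x := by
    refine hmul.congr_deriv ?_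
    unfold haux
    field_simp
    ring
  apply heq.congr_of_eventuallyEq
  filter_upwards [eventually_ne_nhds hx.ne'] with y hy
  simp [Psi, hy]

lemma psi_mono_Ioi : MonotoneOn Psi (Set.Ioi (0:ℝ)) := by
  apply monotoneOn_of_deriv_nonneg (convex_Ioi 0)
  · intro x hx
    exact (hasDerivAt_Psi hx).continuousAt.continuousWithinAt
  · intro x hx
    rw [interior_Ioi] at hx
    exact (hasDerivAt_Psi hx).differentiableAt.differentiableWithinAt
  · intro x hx
    rw [interior_Ioi] at hx
    rw [(hasDerivAt_Psi hx).deriv]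
    exact div_nonneg (haux_nonneg hx) (by positivity)

lemma psi_neg (x : ℝ) : Psi (-x) = 1 - Psi x := by
  rcases eq_or_ne x 0 with rfl | hx
  · simp [Psi]; norm_num
  · have hxneg : -x ≠ 0 := neg_ne_zero.mpr hx
    have hex : Real.exp (-x) * Real.exp x = 1 := by
      rw [← Real.exp_add]; simp
    have hApos : 0 < (Real.exp x - 1) / x := by
      rcases lt_or_gt_of_ne hx with h | h
      · apply div_pos_of_neg_of_neg _ h
        have hlt : Real.exp x < Real.exp 0 := Real.exp_lt_exp.mpr h
        rw [Real.exp_zero] at hlt; linarith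
      · exact A_pos h
    have hc : (Real.exp x - 1) * Real.exp (-x) = 1 - Real.exp (-x) := by
      linear_combination hex
    have key : (Real.exp (-x) - 1) / (-x) = ((Real.exp x - 1) / x) * Real.exp (-x) := by
      rw [div_mul_eq_mul_div, hc, div_neg, ← neg_div]
      ring_nf
    simp only [Psi, hx, hxneg, if_false]
    rw [key, Real.log_mul hApos.ne' (Real.exp_ne_zero _), Real.log_exp]
    field_simp
    ring

lemma psi_eq (x : ℝ) : Psi x = 1 - Psi (-x) := by
  have := psi_neg (-x)
  rw [neg_neg] at this
  linarith

lemma psi_ge_half {x : ℝ} (hx : 0 < x) : 1 / 2 ≤ Psi x := by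
  have hA : Real.exp (x / 2) ≤ (Real.exp x - 1) / x :=
    (le_div_iff₀ hx).mpr (by linarith [key_ineq hx.le])
  have hlog : x / 2 ≤ Real.log ((Real.exp x - 1) / x) := by
    calc x / 2 = Real.log (Real.exp (x / 2)) := (Real.log_exp _).symm
    _ ≤ _ := Real.log_le_log (Real.exp_pos _) hA
  simp only [Psi, hx.ne', if_false]
  have h2 : (1/x) * (x/2) ≤ (1/x) * Real.log ((Real.exp x - 1) / x) :=
    mul_le_mul_of_nonneg_left hlog (by positivity)
  calc (1:ℝ)/2 = (1/x) * (x/2) := by field_simp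
  _ ≤ _ := h2

lemma psi_le_one {x : ℝ} (hx : 0 < x) : Psi x ≤ 1 := by
  have hex : Real.exp (-x) * Real.exp x = 1 := by
    rw [← Real.exp_add]; simp
  have hA : (Real.exp x - 1) / x ≤ Real.exp x := by
    rw [div_le_iff₀ hx]
    nlinarith [Real.add_one_le_exp (-x), Real.exp_pos x]
  have hlog : Real.log ((Real.exp x - 1) / x) ≤ x := by
    calc Real.log ((Real.exp x - 1) / x) ≤ Real.log (Real.exp x) :=
      Real.log_le_log (A_pos hx) hA
    _ = x := Real.log_exp x
  simp only [Psi, hx.ne', if_false]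
  calc (1/x) * Real.log ((Real.exp x - 1) / x) ≤ (1/x) * x :=
    mul_le_mul_of_nonneg_left hlog (by positivity)
  _ = 1 := by field_simp

lemma psi_mono : Monotone Psi := by
  intro x y hxy
  rcases lt_trichotomy x 0 with hx | hx | hx
  · rcases lt_trichotomy y 0 with hy | hy | hy
    · have h := psi_mono_Ioi (Set.mem_Ioi.mpr (neg_pos.mpr hy)) (Set.mem_Ioi.mpr (neg_pos.mpr hx))
        (neg_le_neg hxy)
      rw [psi_eq x, psi_eq y]; linarith
    · subst hy
      have h1 := psi_ge_half (neg_pos.mpr hx)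
      have h0 : Psi 0 = 1/2 := by simp [Psi]
      rw [psi_eq x, h0]; linarith
    · have h1 := psi_ge_half (neg_pos.mpr hx)
      have h2 := psi_ge_half hy
      rw [psi_eq x]; linarith
  · subst hx
    rcases eq_or_lt_of_le hxy with rfl | hy
    · exact le_refl _
    · have h1 := psi_ge_half hy
      have h0 : Psi 0 = 1/2 := by simp [Psi]
      rw [h0]; linarith
  · exact psi_mono_Ioi (Set.mem_Ioi.mpr hx) (Set.mem_Ioi.mpr (lt_of_lt_of_le hx hxy)) hxy

lemma psi_mem_Icc (x : ℝ) : Psi x ∈ Set.Icc (0:ℝ) 1 := by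
  rcases lt_trichotomy x 0 with hx | hx | hx
  · have h1 := psi_ge_half (neg_pos.mpr hx)
    have h2 := psi_le_one (neg_pos.mpr hx)
    rw [psi_eq x]
    constructor <;> [linarith; linarith]
  · subst hx
    constructor <;> norm_num [Psi]
  · exact ⟨le_trans (by norm_num) (psi_ge_half hx), psi_le_one hx⟩

lemma psi_tendsto_atTop : Tendsto Psi atTop (nhds 1) := by
  have hlogdiv : Tendsto (fun x : ℝ => Real.log x / x) atTop (nhds 0) :=
    Real.isLittleO_log_id_atTop.tendsto_div_nhds_zero
  have hconst : Tendsto (fun x : ℝ => Real.log 2 / x) atTop (nhds 0) :=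
    tendsto_const_nhds.div_atTop tendsto_id
  have hlow : Tendsto (fun x : ℝ => 1 - Real.log 2 / x - Real.log x / x) atTop (nhds 1) := by
    have := ((tendsto_const_nhds : Tendsto (fun _ : ℝ => (1:ℝ)) atTop (nhds 1)).sub hconst).sub hlogdiv
    simpa using this
  have hhigh : Tendsto (fun x : ℝ => 1 - Real.log x / x) atTop (nhds 1) := by
    have := (tendsto_const_nhds : Tendsto (fun _ : ℝ => (1:ℝ)) atTop (nhds 1)).sub hlogdiv
    simpa using this
  apply tendsto_of_tendsto_of_tendsto_of_le_of_le' hlow hhigh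
  · filter_upwards [eventually_ge_atTop (1:ℝ)] with x hx
    have hx0 : (0:ℝ) < x := by linarith
    have he := exp_sub_one_pos' hx0
    have h2 : (2:ℝ) ≤ Real.exp x := by
      calc (2:ℝ) ≤ Real.exp 1 := by linarith [Real.add_one_le_exp 1]
      _ ≤ Real.exp x := Real.exp_le_exp.mpr hx
    have hlog1 : x - Real.log 2 ≤ Real.log (Real.exp x - 1) := by
      have e1 : Real.log (Real.exp x / 2) = x - Real.log 2 := by
        rw [Real.log_div (Real.exp_pos x).ne' two_ne_zero, Real.log_exp]
      have e2 : Real.log (Real.exp x / 2) ≤ Real.log (Real.exp x - 1) :=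
        Real.log_le_log (by positivity) (by linarith)
      linarith
    simp only [Psi, hx0.ne', if_false]
    rw [Real.log_div he.ne' hx0.ne']
    have hrw : 1 - Real.log 2 / x - Real.log x / x
        = (1/x) * (x - Real.log 2 - Real.log x) := by field_simp
    rw [hrw]
    apply mul_le_mul_of_nonneg_left _ (by positivity)
    linarith
  · filter_upwards [eventually_gt_atTop (0:ℝ)] with x hx0
    have he := exp_sub_one_pos' hx0
    have hlog2 : Real.log (Real.exp x - 1) ≤ x := by
      calc Real.log (Real.exp x - 1) ≤ Real.log (Real.exp x) :=
        Real.log_le_log he (by linarith)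
      _ = x := Real.log_exp x
    simp only [Psi, hx0.ne', if_false]
    rw [Real.log_div he.ne' hx0.ne']
    have hrw : 1 - Real.log x / x = (1/x) * (x - Real.log x) := by field_simp
    rw [hrw]
    apply mul_le_mul_of_nonneg_left _ (by positivity)
    linarith

theorem psi_is_cdf :
    Monotone Psi ∧ (∀ x : ℝ, Psi x ∈ Set.Icc (0 : ℝ) 1) ∧
      Tendsto Psi atBot (nhds 0) ∧ Tendsto Psi atTop (nhds 1) := by
  refine ⟨psi_mono, psi_mem_Icc, ?_, psi_tendsto_atTop⟩
  have h1 : Tendsto (fun x : ℝ => Psi (-x)) atBot (nhds 1) :=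
    psi_tendsto_atTop.comp tendsto_neg_atBot_atTop
  have h2 : Tendsto (fun x : ℝ => 1 - Psi (-x)) atBot (nhds 0) := by
    have := (tendsto_const_nhds : Tendsto (fun _ : ℝ => (1:ℝ)) atBot (nhds 1)).sub h1
    simpa using this
  refine h2.congr (fun x => ?_)
  rw [psi_neg]
  ring
end

section
/- For each real n ≥ 2, the equation e^{n x} − x − 1 = 0 has a unique negative solution x_n, and this solution satisfies −1 < x_n < −(1/n)·ln n < 0. -/
open Real

theorem unique_negative_root (n : ℝ) (hn : 2 ≤ n) :
    (∃! x : ℝ, x < 0 ∧ Real.exp (n * x) - x - 1 = 0) ∧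
      (∀ x : ℝ, x < 0 → Real.exp (n * x) - x - 1 = 0 →
        -1 < x ∧ x < -(1 / n) * Real.log n) ∧
      -(1 / n) * Real.log n < 0 := by
  have hn0 : (0:ℝ) < n := by linarith
  have hlog : 0 < Real.log n := Real.log_pos (by linarith)
  set g : ℝ → ℝ := fun y => Real.exp (n * y) - y - 1 with hg
  set s : ℝ := -(Real.log n / n) with hs
  have hseq : -(1 / n) * Real.log n = s := by rw [hs]; ring
  have hsneg : s < 0 := by
    rw [hs]
    simp only [neg_neg, neg_lt, neg_zero]
    positivity
  -- derivative
  have hderiv : ∀ x : ℝ, HasDerivAt g (n * Real.exp (n * x) - 1) x := by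
    intro x
    have h1 : HasDerivAt (fun y : ℝ => n * y) n x := by
      simpa using (hasDerivAt_id x).const_mul n
    have h2 := (Real.hasDerivAt_exp (n * x)).comp x h1
    have h3 := (h2.sub (hasDerivAt_id x)).sub_const 1
    exact h3.congr_deriv (by ring)
  have hcont : Continuous g := by
    rw [hg]; continuity
  -- deriv sign
  have hderivval : ∀ x : ℝ, deriv g x = n * Real.exp (n * x) - 1 :=
    fun x => (hderiv x).deriv
  have hneg : ∀ x : ℝ, x < s → n * Real.exp (n * x) - 1 < 0 := by
    intro x hx
    have h1 : n * x < -Real.log n := by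
      rw [hs] at hx
      have := (mul_lt_mul_iff_right₀ hn0).mpr hx
      calc n * x < n * -(Real.log n / n) := this
        _ = -Real.log n := by field_simp
    have h2 : Real.exp (n * x) < Real.exp (-Real.log n) := Real.exp_lt_exp.mpr h1
    have h3 : Real.exp (-Real.log n) = n⁻¹ := by
      rw [Real.exp_neg, Real.exp_log hn0]
    have h4 : n * Real.exp (n * x) < n * n⁻¹ := by
      rw [← h3]; exact (mul_lt_mul_iff_right₀ hn0).mpr h2
    rw [mul_inv_cancel₀ (ne_of_gt hn0)] at h4
    linarith
  have hpos : ∀ x : ℝ, s < x → 0 < n * Real.exp (n * x) - 1 := by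
    intro x hx
    have h1 : -Real.log n < n * x := by
      rw [hs] at hx
      have := (mul_lt_mul_iff_right₀ hn0).mpr hx
      calc -Real.log n = n * -(Real.log n / n) := by field_simp
        _ < n * x := this
    have h2 : Real.exp (-Real.log n) < Real.exp (n * x) := Real.exp_lt_exp.mpr h1
    have h3 : Real.exp (-Real.log n) = n⁻¹ := by
      rw [Real.exp_neg, Real.exp_log hn0]
    have h4 : n * n⁻¹ < n * Real.exp (n * x) := by
      rw [← h3]; exact (mul_lt_mul_iff_right₀ hn0).mpr h2
    rw [mul_inv_cancel₀ (ne_of_gt hn0)] at h4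
    linarith
  -- strict antitone on Iic s
  have hanti : StrictAntiOn g (Set.Iic s) := by
    apply strictAntiOn_of_deriv_neg (convex_Iic s) hcont.continuousOn
    intro x hx
    rw [interior_Iic] at hx
    rw [hderivval]
    exact hneg x hx
  -- strict monotone on Icc s 0
  have hmono : StrictMonoOn g (Set.Icc s 0) := by
    apply strictMonoOn_of_deriv_pos (convex_Icc s 0) hcont.continuousOn
    intro x hx
    rw [interior_Icc] at hx
    rw [hderivval]
    exact hpos x hx.1
  -- values
  have hg0 : g 0 = 0 := by simp [hg]
  have hgs : g s < 0 := by
    have hns : n * s = -Real.log n := by rw [hs]; field_simp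
    have h1 : g s = n⁻¹ + Real.log n / n - 1 := by
      simp only [hg, hns, Real.exp_neg, Real.exp_log hn0]
      rw [hs]; ring
    have h2 : Real.log n < n - 1 :=
      Real.log_lt_sub_one_of_pos hn0 (by linarith)
    have h3 : n⁻¹ + Real.log n / n - 1 = (1 + Real.log n - n) / n := by
      field_simp
    rw [h1, h3]
    apply div_neg_of_neg_of_pos _ hn0
    linarith
  have hgm1 : 0 < g (-1) := by
    have : g (-1) = Real.exp (-n) := by simp [hg]
    rw [this]; exact Real.exp_pos _
  have hm1s : (-1 : ℝ) < s := by
    rw [hs]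
    have h2 : Real.log n < n - 1 :=
      Real.log_lt_sub_one_of_pos hn0 (by linarith)
    have : Real.log n / n < 1 := by
      rw [div_lt_one hn0]; linarith
    linarith
  -- any negative root lies in Iio s
  have hroot_lt : ∀ y : ℝ, y < 0 → g y = 0 → y < s := by
    intro y hy hgy
    by_contra h
    push_neg at h
    have h1 : g y < g 0 := hmono ⟨h, le_of_lt hy⟩ ⟨le_of_lt hsneg, le_refl 0⟩ hy
    rw [hg0, hgy] at h1
    exact lt_irrefl 0 h1
  -- any negative root is > -1
  have hroot_gt : ∀ y : ℝ, y < 0 → g y = 0 → -1 < y := by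
    intro y hy hgy
    by_contra h
    push_neg at h
    have hys : y < s := hroot_lt y hy hgy
    rcases eq_or_lt_of_le h with h' | h'
    · rw [← h', hgy] at hgm1; exact lt_irrefl 0 hgm1
    · have := hanti (h.trans (le_of_lt hm1s)) (le_of_lt hm1s) h'
      rw [hgy] at this
      linarith
  -- existence
  have hex : ∃ c ∈ Set.Ioo (-1 : ℝ) s, g c = 0 := by
    have hsub := intermediate_value_Ioo' (le_of_lt hm1s) hcont.continuousOn
    have : (0:ℝ) ∈ Set.Ioo (g s) (g (-1)) := ⟨hgs, hgm1⟩
    obtain ⟨c, hc, hc0⟩ := hsub this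
    exact ⟨c, hc, hc0⟩
  obtain ⟨c, ⟨hc1, hc2⟩, hc0⟩ := hex
  have hcneg : c < 0 := hc2.trans hsneg
  refine ⟨⟨c, ⟨hcneg, hc0⟩, ?_⟩, ?_, ?_⟩
  · rintro y ⟨hy, hgy⟩
    have hys : y < s := hroot_lt y hy hgy
    exact hanti.injOn (le_of_lt hys) (le_of_lt hc2) (hgy.trans hc0.symm)
  · intro x hx hgx
    exact ⟨hroot_gt x hx hgx, by rw [hseq]; exact hroot_lt x hx hgx⟩
  · rw [hseq]; exact hsneg
end

section
/- For each n ≥ 2, the unique negative root x_n of e^{n x} − x − 1 = 0 satisfies |x_n + 1| ≤ 1/n; consequently x_n → −1 as n → ∞. -/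
open Real Filter

theorem negative_root_near_neg_one (r : ℝ → ℝ)
    (hr : ∀ n : ℝ, 2 ≤ n → r n < 0 ∧ Real.exp (n * r n) - r n - 1 = 0) :
    (∀ n : ℝ, 2 ≤ n → |r n + 1| ≤ 1 / n) ∧ Tendsto r atTop (nhds (-1)) := by
  have key : ∀ n : ℝ, 2 ≤ n → |r n + 1| ≤ 1 / n := by
    intro n hn
    obtain ⟨hneg, heq⟩ := hr n hn
    have hexp : Real.exp (n * r n) = r n + 1 := by linarith
    have hpos : 0 < r n + 1 := hexp ▸ Real.exp_pos _
    have h1 : -(n * r n) + 1 ≤ Real.exp (-(n * r n)) := Real.add_one_le_exp _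
    have h2 : Real.exp (-(n * r n)) * Real.exp (n * r n) = 1 := by
      rw [← Real.exp_add]; simp
    have hA : (1 - n * r n) * (r n + 1) ≤ 1 := by
      calc (1 - n * r n) * (r n + 1) ≤ Real.exp (-(n * r n)) * (r n + 1) := by
            apply mul_le_mul_of_nonneg_right (by linarith) (le_of_lt hpos)
        _ = 1 := by rw [← hexp]; exact h2
    rw [abs_of_pos hpos, le_div_iff₀ (by linarith : (0:ℝ) < n)]
    nlinarith [hA, hneg, hpos]
  refine ⟨key, ?_⟩
  have h0 : Tendsto (fun n : ℝ => r n + 1) atTop (nhds 0) := by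
    have hb : ∀ᶠ n in atTop, ‖r n + 1‖ ≤ (fun n : ℝ => 1 / n) n := by
      filter_upwards [eventually_ge_atTop (2:ℝ)] with n hn
      simpa [Real.norm_eq_abs] using key n hn
    have hg : Tendsto (fun n : ℝ => 1 / n) atTop (nhds 0) := by
      simpa [one_div] using (tendsto_inv_atTop_zero : Tendsto (fun x:ℝ => x⁻¹) atTop (nhds 0))
    exact squeeze_zero_norm' hb hg
  have := h0.sub_const 1
  simpa using this
end

section
/- The sequence of negative roots is decreasing: if for each real n ≥ 2 we let x_n be the unique negative root of e^{n x} − x − 1 = 0, then n ↦ x_n is strictly decreasing in n (for n in [2, ∞)). -/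
open Real

theorem negative_root_strictAnti (r : ℝ → ℝ)
    (hr : ∀ n : ℝ, 2 ≤ n → r n < 0 ∧ Real.exp (n * r n) - r n - 1 = 0) :
    StrictAntiOn r (Set.Ici (2 : ℝ)) := by
  intro m hm n hn hmn
  simp only [Set.mem_Ici] at hm hn
  obtain ⟨hm0, hme⟩ := hr m hm
  obtain ⟨hn0, hne⟩ := hr n hn
  have hme' : Real.exp (m * r m) = r m + 1 := by linarith
  have hne' : Real.exp (n * r n) = r n + 1 := by linarith
  have key : Real.exp (n * r m) < r m + 1 := by
    rw [← hme']
    exact Real.exp_lt_exp.2 (by nlinarith)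
  by_contra h
  push_neg at h
  rcases eq_or_lt_of_le h with heq | hlt
  · rw [heq] at key; linarith
  · set t : ℝ := r n / r m with ht
    have htr : t * r m = r n := div_mul_cancel₀ _ (ne_of_lt hm0)
    have ht0 : 0 < t := div_pos_of_neg_of_neg hn0 hm0
    have ht1 : t < 1 := by nlinarith
    have hne0 : n * r m ≠ 0 := by nlinarith
    have hc := strictConvexOn_exp.2 (Set.mem_univ (n * r m)) (Set.mem_univ (0 : ℝ))
      hne0 ht0 (by linarith : (0:ℝ) < 1 - t) (by ring)
    simp only [smul_eq_mul, mul_zero, add_zero, Real.exp_zero, mul_one] at hc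
    have harg : t * (n * r m) = n * r n := by rw [← htr]; ring
    rw [harg, hne'] at hc
    nlinarith
end

section
/- Let λ > 0, n ≥ 1, p ∈ ℝ and x_* > 0. Define Φ_{λ,n}(x) = λ·ln((e^{n(p−x)/λ} − 1)/((p−x)/λ)) (extended continuously at x = p by λ ln n). Then for all x ≥ p + x_*, the derivative satisfies ∂_x Φ_{λ,n}(x) ≥ max(−λ/x_*, −n/2). -/
open Real

/-- The entropy-regularized driver Φ_{λ,n}(x) = λ ln((e^{n(p−x)/λ} − 1)/((p−x)/λ)),
extended continuously at x = p by λ ln n. -/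
noncomputable def PhiLN (lam n p x : ℝ) : ℝ :=
  if x = p then lam * Real.log n
  else lam * Real.log ((Real.exp (n * (p - x) / lam) - 1) / ((p - x) / lam))

lemma aux_key (s : ℝ) (hs : 0 ≤ s) : 2 - s ≤ (2 + s) * Real.exp (-s) := by
  have hf : ∀ t : ℝ, HasDerivAt (fun s => (2 + s) * Real.exp (-s) + s)
      (1 - (1 + t) * Real.exp (-t)) t := by
    intro t
    have h1 : HasDerivAt (fun s : ℝ => -s) (-1) t := (hasDerivAt_id t).neg
    have h2 : HasDerivAt (fun s : ℝ => Real.exp (-s)) (-Real.exp (-t)) t := by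
      have := (Real.hasDerivAt_exp (-t)).comp t h1
      exact this.congr_deriv (by ring)
    have h3 : HasDerivAt (fun s : ℝ => 2 + s) 1 t := by
      simpa using (hasDerivAt_id t).const_add 2
    have := (h3.mul h2).add (hasDerivAt_id t)
    exact this.congr_deriv (by ring)
  have hmono : MonotoneOn (fun s => (2 + s) * Real.exp (-s) + s) (Set.Ici (0:ℝ)) := by
    apply monotoneOn_of_deriv_nonneg (convex_Ici 0)
    · exact Continuous.continuousOn (by continuity)
    · intro t _
      exact (hf t).differentiableAt.differentiableWithinAt
    · intro t ht
      rw [(hf t).deriv]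
      have ht0 : (0:ℝ) ≤ t := le_of_lt (by simpa using ht)
      have h1 : 1 + t ≤ Real.exp t := by linarith [Real.add_one_le_exp t]
      have h2 : (1 + t) * Real.exp (-t) ≤ Real.exp t * Real.exp (-t) :=
        mul_le_mul_of_nonneg_right h1 (Real.exp_pos _).le
      rw [← Real.exp_add] at h2
      simp at h2
      linarith
  have := hmono Set.self_mem_Ici (Set.mem_Ici.2 hs) hs
  simp only [add_zero, neg_zero, Real.exp_zero, mul_one] at this
  linarith

lemma aux_half (s : ℝ) (hs : 0 < s) : 1 / s - 1 / (Real.exp s - 1) ≤ 1 / 2 := by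
  have h1 : 1 < Real.exp s := by
    rw [← Real.exp_zero]; exact Real.exp_lt_exp.2 hs
  have hkey := aux_key s hs.le
  have h2 : (2 - s) * Real.exp s ≤ 2 + s := by
    have := mul_le_mul_of_nonneg_right hkey (Real.exp_pos s).le
    rw [mul_assoc, ← Real.exp_add] at this
    simpa using this
  rw [div_sub_div _ _ (ne_of_gt hs) (by linarith), div_le_div_iff₀ (mul_pos hs (by linarith)) (by norm_num)]
  nlinarith

theorem driver_deriv_lower_bound (lam n p xs : ℝ) (hlam : 0 < lam) (hn : 1 ≤ n)
    (hxs : 0 < xs) :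
    ∀ x : ℝ, p + xs ≤ x →
      max (-lam / xs) (-n / 2) ≤ deriv (PhiLN lam n p) x := by
  intro x hx
  have hxp : p < x := by linarith
  set u : ℝ := n * (p - x) / lam with hu
  have hn0 : (0:ℝ) < n := by linarith
  have hu_neg : u < 0 := by
    rw [hu]; apply div_neg_of_neg_of_pos _ hlam
    exact mul_neg_of_pos_of_neg hn0 (by linarith)
  have hE1 : Real.exp u < 1 := by
    rw [← Real.exp_zero]; exact Real.exp_lt_exp.2 hu_neg
  have hEpos := Real.exp_pos u
  set g : ℝ → ℝ := fun y =>
    lam * (Real.log (1 - Real.exp (n * (p - y) / lam)) - Real.log ((y - p) / lam)) with hg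
  have heq : PhiLN lam n p =ᶠ[nhds x] g := by
    filter_upwards [IsOpen.mem_nhds isOpen_Ioi (Set.mem_Ioi.2 hxp)] with y hy
    have hyp : p < y := hy
    have hyne : y ≠ p := by intro h; rw [h] at hyp; exact lt_irrefl _ hyp
    rw [PhiLN, if_neg hyne, hg]
    have huy : n * (p - y) / lam < 0 := by
      apply div_neg_of_neg_of_pos _ hlam
      exact mul_neg_of_pos_of_neg hn0 (by linarith)
    have hEy : Real.exp (n * (p - y) / lam) < 1 := by
      rw [← Real.exp_zero]; exact Real.exp_lt_exp.2 huy
    have hden : (y - p) / lam > 0 := by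
      apply div_pos _ hlam; linarith
    have hden2 : (p - y) / lam < 0 := by
      apply div_neg_of_neg_of_pos _ hlam; linarith
    have hratio : (Real.exp (n * (p - y) / lam) - 1) / ((p - y) / lam)
        = (1 - Real.exp (n * (p - y) / lam)) / ((y - p) / lam) := by
      rw [div_eq_div_iff (ne_of_lt hden2) (ne_of_gt hden)]; ring
    rw [hratio, Real.log_div (by linarith) (ne_of_gt hden)]
  have hA : HasDerivAt (fun y : ℝ => n * (p - y) / lam) (-n / lam) x := by
    have : HasDerivAt (fun y : ℝ => n * (p - y) / lam) ((n * (0 - 1)) / lam) x :=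
      (((hasDerivAt_const x p).sub (hasDerivAt_id x)).const_mul n).div_const lam
    simpa using this
  have hExp : HasDerivAt (fun y : ℝ => Real.exp (n * (p - y) / lam))
      (Real.exp u * (-n / lam)) x := hA.exp
  have hOne : HasDerivAt (fun y : ℝ => 1 - Real.exp (n * (p - y) / lam))
      (-(Real.exp u * (-n / lam))) x := hExp.const_sub 1
  have hLog1 : HasDerivAt (fun y : ℝ => Real.log (1 - Real.exp (n * (p - y) / lam)))
      ((-(Real.exp u * (-n / lam))) / (1 - Real.exp u)) x :=
    hOne.log (by linarith)
  have hLin : HasDerivAt (fun y : ℝ => (y - p) / lam) (1 / lam) x := by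
    simpa using ((hasDerivAt_id x).sub_const p).div_const lam
  have hxppos : (0:ℝ) < (x - p) / lam := by
    apply div_pos _ hlam; linarith
  have hLog2 : HasDerivAt (fun y : ℝ => Real.log ((y - p) / lam))
      ((1 / lam) / ((x - p) / lam)) x := hLin.log (ne_of_gt hxppos)
  have hG : HasDerivAt g
      (lam * ((-(Real.exp u * (-n / lam))) / (1 - Real.exp u) - (1 / lam) / ((x - p) / lam))) x :=
    (hLog1.sub hLog2).const_mul lam
  have hderiv : deriv (PhiLN lam n p) x
      = lam * ((-(Real.exp u * (-n / lam))) / (1 - Real.exp u) - (1 / lam) / ((x - p) / lam)) := by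
    rw [Filter.EventuallyEq.deriv_eq heq]
    exact hG.deriv
  rw [hderiv]
  have hsimp : lam * ((-(Real.exp u * (-n / lam))) / (1 - Real.exp u) - (1 / lam) / ((x - p) / lam))
      = n * Real.exp u / (1 - Real.exp u) - lam / (x - p) := by
    have h1 : (1:ℝ) - Real.exp u ≠ 0 := by linarith
    have h2 : x - p ≠ 0 := by intro h; nlinarith
    field_simp
  rw [hsimp]
  have hfirst : 0 ≤ n * Real.exp u / (1 - Real.exp u) := by
    apply div_nonneg (by positivity) (by linarith)
  rw [max_le_iff]
  constructor
  · have h1 : lam / (x - p) ≤ lam / xs := by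
      apply div_le_div_of_nonneg_left hlam.le hxs
      linarith
    have h2 : -lam / xs = -(lam / xs) := by ring
    rw [h2]
    linarith
  · set s : ℝ := n * (x - p) / lam with hs
    have hspos : 0 < s := by
      apply div_pos _ hlam; nlinarith
    have hhalf := aux_half s hspos
    have hus : u = -s := by rw [hu, hs]; ring
    have hEu : Real.exp u = (Real.exp s)⁻¹ := by rw [hus, Real.exp_neg]
    have hEs1 : 1 < Real.exp s := by
      rw [← Real.exp_zero]; exact Real.exp_lt_exp.2 hspos
    have hEs0 : Real.exp s ≠ 0 := (Real.exp_pos s).ne'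
    have hEsm1 : Real.exp s - 1 ≠ 0 := by linarith
    have hrw1 : n * Real.exp u / (1 - Real.exp u) = n / (Real.exp s - 1) := by
      rw [hEu]
      field_simp
    have hrw2 : lam / (x - p) = n / s := by
      rw [hs, div_eq_div_iff (by linarith) (ne_of_gt hspos),
        mul_div_assoc', mul_comm lam, mul_div_assoc, div_self hlam.ne', mul_one]
    rw [hrw1, hrw2]
    have h := mul_le_mul_of_nonneg_left hhalf hn0.le
    rw [mul_sub, mul_one_div, mul_one_div, mul_one_div] at h
    linarith
end
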